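/- Let κ₁ > 0, κ₂ > 0, χ > 0, γ > 0, ρ₁ > 0, ε > 0 be real numbers, set κ = κ₁ + κ₂, and let the 2×2 matrices of the passive OPO decomposition be A = −(κ/2)·I, B₁ = C₁ = √κ₂·I, B₂ = C₂ = √κ₁·I, D₁ = D₂ = −I, H₁ = χ·I, E₁ = I (so that G = D₁ᵀD₁ = I). Set b = κ₂ − κ₁/γ² − χ²ερ₁². Then for every real x, the matrix X = x·I₂ is a stabilising solution of the Riccati equation (R1) (with ρ = ρ₁) if and only if (κ₂ − κ₁)x − bx² + 1/ε = 0 and (κ₂ − κ₁)/2 − bx < 0. -/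
import Mathlib


open Matrix Polynomial

noncomputable section

/-- A real square matrix is Hurwitz if every eigenvalue of it, regarded as a complex
matrix (i.e. every complex root of its characteristic polynomial), has negative real part. -/
def IsHurwitz {N : Type*} [Fintype N] [DecidableEq N] (M : Matrix N N ℝ) : Prop :=
  ∀ μ : ℂ, (M.map Complex.ofReal).charpoly.IsRoot μ → μ.re < 0

/-- `X` is a stabilising solution of the Riccati equation (R1). -/
def R1StabSol {n m p q s t : ℕ}
    (A : Matrix (Fin n) (Fin n) ℝ) (B₁ : Matrix (Fin n) (Fin m) ℝ)
    (B₂ : Matrix (Fin n) (Fin p) ℝ) (C₁ : Matrix (Fin q) (Fin n) ℝ)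
    (D₁ : Matrix (Fin q) (Fin m) ℝ) (H₁ : Matrix (Fin n) (Fin s) ℝ)
    (E₁ : Matrix (Fin t) (Fin n) ℝ) (γ ρ ε : ℝ)
    (X : Matrix (Fin n) (Fin n) ℝ) : Prop :=
  let G := D₁ᵀ * D₁
  let Abar := A - B₁ * G⁻¹ * D₁ᵀ * C₁
  let R := B₁ * G⁻¹ * B₁ᵀ - (ε * ρ ^ 2) • (H₁ * H₁ᵀ) - (γ ^ 2)⁻¹ • (B₂ * B₂ᵀ)
  X.IsSymm ∧
  Abarᵀ * X + X * Abar - X * R * X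
    + C₁ᵀ * (1 - D₁ * G⁻¹ * D₁ᵀ) * C₁ + ε⁻¹ • (E₁ᵀ * E₁) = 0 ∧
  IsHurwitz (Abar - R * X)

/-- `Y` is a stabilising solution of the Riccati equation (R2). -/
def R2StabSol {n p q r s t : ℕ}
    (A : Matrix (Fin n) (Fin n) ℝ) (B₂ : Matrix (Fin n) (Fin p) ℝ)
    (C₁ : Matrix (Fin q) (Fin n) ℝ) (C₂ : Matrix (Fin r) (Fin n) ℝ)
    (D₂ : Matrix (Fin r) (Fin p) ℝ) (H₁ : Matrix (Fin n) (Fin s) ℝ)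
    (E₁ : Matrix (Fin t) (Fin n) ℝ) (γ ρ ε : ℝ)
    (Y : Matrix (Fin n) (Fin n) ℝ) : Prop :=
  let Γm := D₂ * D₂ᵀ
  let Ahat := A - B₂ * D₂ᵀ * Γm⁻¹ * C₂
  let S := (γ ^ 2) • (C₂ᵀ * Γm⁻¹ * C₂) - ε⁻¹ • (E₁ᵀ * E₁) - C₁ᵀ * C₁
  Y.IsSymm ∧
  Ahat * Y + Y * Ahatᵀ - Y * S * Y
    + (γ ^ 2)⁻¹ • (B₂ * (1 - D₂ᵀ * Γm⁻¹ * D₂) * B₂ᵀ) + (ε * ρ ^ 2) • (H₁ * H₁ᵀ) = 0 ∧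
  IsHurwitz (Ahat - Y * S)

lemma smul_one_eq_zero_iff (c : ℝ) :
    c • (1 : Matrix (Fin 2) (Fin 2) ℝ) = 0 ↔ c = 0 := by
  constructor
  · intro h
    have := congrArg (fun M => M 0 0) h
    simpa [Matrix.one_apply] using this
  · rintro rfl; simp

lemma hurwitz_smul_one (c : ℝ) :
    IsHurwitz (c • (1 : Matrix (Fin 2) (Fin 2) ℝ)) ↔ c < 0 := by
  have hmap : (c • (1 : Matrix (Fin 2) (Fin 2) ℝ)).map Complex.ofReal
      = (c : ℂ) • (1 : Matrix (Fin 2) (Fin 2) ℂ) := by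
    ext i j
    by_cases h : i = j <;> simp [Matrix.one_apply, h]
  have hcp : ((c : ℂ) • (1 : Matrix (Fin 2) (Fin 2) ℂ)).charpoly
      = (X - C (c : ℂ)) ^ 2 := by
    rw [Matrix.charpoly, Matrix.det_fin_two]
    rw [charmatrix_apply_eq, charmatrix_apply_eq,
      charmatrix_apply_ne _ _ _ (by decide), charmatrix_apply_ne _ _ _ (by decide)]
    simp [Matrix.one_apply]
    ring
  constructor
  · intro h
    have := h c (by rw [hmap, hcp]; simp [IsRoot])
    simpa using this
  · intro hc μ hroot
    rw [hmap, hcp] at hroot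
    simp only [IsRoot, eval_pow, eval_sub, eval_X, eval_C] at hroot
    have h0 : μ - (c:ℂ) = 0 := by
      have := pow_eq_zero_iff (two_ne_zero) |>.mp hroot
      exact this
    have : μ = (c:ℂ) := by linear_combination h0
    simpa [this] using hc


set_option maxHeartbeats 1000000 in
/-- For the passive OPO decomposition, `X = x I₂` is a stabilising solution of the
Riccati equation (R1) iff `x` solves the scalar equation
`(κ₂ - κ₁)x - bx² + 1/ε = 0` with `(κ₂ - κ₁)/2 - bx < 0`, where
`b = κ₂ - κ₁/γ² - χ²ερ₁²`. -/
theorem stmt12 (κ₁ κ₂ χ γ ρ₁ ε : ℝ)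
    (hκ₁ : 0 < κ₁) (hκ₂ : 0 < κ₂) (hχ : 0 < χ) (hγ : 0 < γ) (hρ₁ : 0 < ρ₁)
    (hε : 0 < ε) (x : ℝ) :
    let b : ℝ := κ₂ - κ₁ / γ ^ 2 - χ ^ 2 * ε * ρ₁ ^ 2
    R1StabSol (-((κ₁ + κ₂) / 2) • (1 : Matrix (Fin 2) (Fin 2) ℝ))
        (Real.sqrt κ₂ • (1 : Matrix (Fin 2) (Fin 2) ℝ))
        (Real.sqrt κ₁ • (1 : Matrix (Fin 2) (Fin 2) ℝ))
        (Real.sqrt κ₂ • (1 : Matrix (Fin 2) (Fin 2) ℝ))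
        (-1 : Matrix (Fin 2) (Fin 2) ℝ)
        (χ • (1 : Matrix (Fin 2) (Fin 2) ℝ))
        (1 : Matrix (Fin 2) (Fin 2) ℝ) γ ρ₁ ε
        (x • (1 : Matrix (Fin 2) (Fin 2) ℝ)) ↔
      ((κ₂ - κ₁) * x - b * x ^ 2 + 1 / ε = 0 ∧ (κ₂ - κ₁) / 2 - b * x < 0) := by
  intro b
  have hk2 : Real.sqrt κ₂ * Real.sqrt κ₂ = κ₂ := Real.mul_self_sqrt hκ₂.le
  have hk1 : Real.sqrt κ₁ * Real.sqrt κ₁ = κ₁ := Real.mul_self_sqrt hκ₁.le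
  unfold R1StabSol
  simp only [Matrix.transpose_neg, Matrix.transpose_one, Matrix.transpose_smul,
    Matrix.neg_mul, Matrix.mul_neg, neg_neg, Matrix.mul_one, Matrix.one_mul,
    Matrix.smul_mul, Matrix.mul_smul, inv_one, smul_smul, hk1, hk2,
    neg_smul, smul_neg, sub_self, Matrix.mul_zero, Matrix.zero_mul]
  show _ ↔ _
  simp only [show b = κ₂ - κ₁ / γ ^ 2 - χ ^ 2 * ε * ρ₁ ^ 2 from rfl]
  have h1 : x • (-(((κ₁ + κ₂) / 2) • (1 : Matrix (Fin 2) (Fin 2) ℝ)) - -(κ₂ • 1))ᵀ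
        + x • (-(((κ₁ + κ₂) / 2) • (1 : Matrix (Fin 2) (Fin 2) ℝ)) - -(κ₂ • 1))
        - (x * x) • (κ₂ • (1 : Matrix (Fin 2) (Fin 2) ℝ) - (ε * ρ₁ ^ 2 * (χ * χ)) • 1
            - ((γ ^ 2)⁻¹ * κ₁) • 1)
        + Real.sqrt κ₂ • (0 : Matrix (Fin 2) (Fin 2) ℝ) + ε⁻¹ • 1
      = ((κ₂ - κ₁) * x - (κ₂ - κ₁ / γ ^ 2 - χ ^ 2 * ε * ρ₁ ^ 2) * x ^ 2 + 1 / ε)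
          • (1 : Matrix (Fin 2) (Fin 2) ℝ) := by
    simp only [Matrix.transpose_sub, Matrix.transpose_neg, Matrix.transpose_smul,
      Matrix.transpose_one, smul_zero]
    match_scalars
    ring
  have h2 : -(((κ₁ + κ₂) / 2) • (1 : Matrix (Fin 2) (Fin 2) ℝ)) - -(κ₂ • 1)
        - x • (κ₂ • (1 : Matrix (Fin 2) (Fin 2) ℝ) - (ε * ρ₁ ^ 2 * (χ * χ)) • 1
            - ((γ ^ 2)⁻¹ * κ₁) • 1)
      = ((κ₂ - κ₁) / 2 - (κ₂ - κ₁ / γ ^ 2 - χ ^ 2 * ε * ρ₁ ^ 2) * x)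
          • (1 : Matrix (Fin 2) (Fin 2) ℝ) := by
    match_scalars
    ring
  rw [h1, h2, smul_one_eq_zero_iff, hurwitz_smul_one]
  have hsym : (x • (1 : Matrix (Fin 2) (Fin 2) ℝ)).IsSymm := by
    simp [Matrix.IsSymm]
  tauto
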